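/- Let G be a graph with at least 3 vertices and let v and w be two distinct outer vertices of G. Then deleting them in either order gives the same graph, (G/v)/w = (G/w)/v, and the square of outer coface maps commutes: δ^v ∘ δ^w = δ^w ∘ δ^v as graphical maps (G/v)/w → G. -/

import Mathlib

/-!  A formalization of the graphical category of finite (connected) multigraphs
with legs, loops and parallel edges, following the half-edge encoding:
a graph is given by a finite set of vertices, a finite set of half-edges,
an involution pairing the two halves of an edge (legs and free edges have a
fixed or unattached half), and an attachment map.  Graphical maps are encoded
by their action on (half-)edges together with the assignment of an embedded
subgraph (given by its vertex set and its ι-closed set of half-edges) to each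
vertex; `PreGMap.EqOn G f g` is equality of graphical maps out of `G`. -/

structure HGraph where
  V : Finset ℕ
  H : Finset ℕ
  ι : ℕ → ℕ
  att : ℕ → Option ℕ

namespace HGraph

/-- Two vertices are adjacent when some edge joins them. -/
def Adj (G : HGraph) (v w : ℕ) : Prop :=
  ∃ h ∈ G.H, G.att h = some v ∧ G.att (G.ι h) = some w

/-- Connectedness of a graph. -/
def Connected (G : HGraph) : Prop :=
  ∀ v ∈ G.V, ∀ w ∈ G.V, Relation.ReflTransGen G.Adj v w

/-- Well-formedness: the involution and the attachment are internal to the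
graph, and the graph is connected (graphs are finite connected multigraphs). -/
def Wf (G : HGraph) : Prop :=
  (∀ h ∈ G.H, G.ι h ∈ G.H) ∧
  (∀ h ∈ G.H, G.ι (G.ι h) = h) ∧
  (∀ h ∈ G.H, ∀ v, G.att h = some v → v ∈ G.V) ∧
  G.Connected

/-- `h` is (a half of) an inner edge: both ends are attached to vertices. -/
def IsInnerEdge (G : HGraph) (h : ℕ) : Prop :=
  h ∈ G.H ∧ h ≠ G.ι h ∧ (G.att h).isSome ∧ (G.att (G.ι h)).isSome

/-- `h` is (a half of) a loop: an edge from a vertex to itself. -/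
def IsLoop (G : HGraph) (h : ℕ) : Prop :=
  h ∈ G.H ∧ h ≠ G.ι h ∧ ∃ v, G.att h = some v ∧ G.att (G.ι h) = some v

/-- The number of non-leg edges incident to `v` (a loop counts once). -/
def nonLegEdgeCount (G : HGraph) (v : ℕ) : ℕ :=
  (G.H.filter fun h => G.att h = some v ∧ (G.att (G.ι h)).isSome ∧ G.att (G.ι h) ≠ some v).card +
  (G.H.filter fun h => G.att h = some v ∧ G.att (G.ι h) = some v ∧ h ≠ G.ι h).card / 2

/-- An outer vertex: at most one incident non-leg edge. -/
def IsOuterVertex (G : HGraph) (v : ℕ) : Prop :=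
  v ∈ G.V ∧ G.nonLegEdgeCount v ≤ 1

/-- The corolla at `v`, as an embedded subgraph (vertex set and half-edges). -/
def corolla (G : HGraph) (v : ℕ) : Finset ℕ × Finset ℕ :=
  ({v}, G.H.filter fun h => G.att h = some v ∨ G.att (G.ι h) = some v)

/-- `G/b`: contract the (non-loop) inner edge `b`, merging its two endpoints
into the single vertex `min x y`. -/
def contract (G : HGraph) (b : ℕ) : HGraph :=
  let x := (G.att b).getD 0
  let y := (G.att (G.ι b)).getD 0
  let z := min x y
  let H' := G.H.filter fun h => h ≠ b ∧ h ≠ G.ι b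
  { V := insert z ((G.V.erase x).erase y)
    H := H'
    ι := fun h => if h ∈ H' then G.ι h else h
    att := fun h => if h ∈ H' then
        (if G.att h = some x ∨ G.att h = some y then some z else G.att h) else none }

/-- `G/v`: delete the (outer) vertex `v` together with its legs and loops;
edges joining `v` to other vertices become legs. -/
def delVertex (G : HGraph) (v : ℕ) : HGraph :=
  let H' := G.H.filter fun h =>
    ¬ ((G.att h = some v ∨ G.att (G.ι h) = some v) ∧
       (G.att h = some v ∨ G.att h = none) ∧
       (G.att (G.ι h) = some v ∨ G.att (G.ι h) = none))
  { V := G.V.erase v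
    H := H'
    ι := fun h => if h ∈ H' then G.ι h else h
    att := fun h => if h ∈ H' then (if G.att h = some v then none else G.att h) else none }

/-- `G/ℓ`: snip the loop (or cut the edge) `l` into two legs, with fresh
half-edges `a` and `b` as the new free ends. -/
def snip (G : HGraph) (l a b : ℕ) : HGraph :=
  let H' := insert a (insert b G.H)
  { V := G.V
    H := H'
    ι := fun h => if h ∈ H' then
        (if h = l then a else if h = a then l else
         if h = G.ι l then b else if h = b then G.ι l else G.ι h) else h
    att := fun h => if h ∈ H' then (if h = a ∨ h = b then none else G.att h) else none }

/-- `G_b`: subdivide the edge `b` by one new bivalent vertex `u`,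
splitting `b` into the two edges `{b, n₁}` and `{n₂, ι b}`. -/
def subdiv (G : HGraph) (b u n₁ n₂ : ℕ) : HGraph :=
  let H' := insert n₁ (insert n₂ G.H)
  { V := insert u G.V
    H := H'
    ι := fun h => if h ∈ H' then
        (if h = b then n₁ else if h = n₁ then b else
         if h = n₂ then (if G.ι b = b then n₂ else G.ι b) else
         if h = G.ι b then n₂ else G.ι h) else h
    att := fun h => if h ∈ H' then (if h = n₁ ∨ h = n₂ then some u else G.att h) else none }

/-- Validity of the data of a subdivision: `b` is an edge and the new names are fresh. -/
def IsDegen (G : HGraph) (b u n₁ n₂ : ℕ) : Prop :=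
  b ∈ G.H ∧ u ∉ G.V ∧ n₁ ∉ G.H ∧ n₂ ∉ G.H ∧ n₁ ≠ n₂

end HGraph

/-- The data of a graphical map: a map on half-edges (inducing the map `f₀` on
edges) and, for each vertex, an embedded subgraph of the target
(its vertex set together with its set of half-edges). -/
structure PreGMap where
  e : ℕ → ℕ
  vimg : ℕ → Finset ℕ × Finset ℕ

/-- Composition of graphical maps: compose on edges; the embedded subgraph at a
vertex is assembled by substituting the images of the vertices of its image. -/
def PreGMap.comp (g f : PreGMap) : PreGMap where
  e := g.e ∘ f.e
  vimg := fun v =>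
    ((f.vimg v).1.biUnion fun w => (g.vimg w).1,
     (f.vimg v).2.image g.e ∪ (f.vimg v).1.biUnion fun w => (g.vimg w).2)

/-- Equality of graphical maps out of `G` (extensional equality of `f₀` and `f₁`). -/
def PreGMap.EqOn (G : HGraph) (f g : PreGMap) : Prop :=
  (∀ h ∈ G.H, f.e h = g.e h) ∧ ∀ v ∈ G.V, f.vimg v = g.vimg v

namespace HGraph

/-- The identity graphical map of `G`. -/
def idMap (G : HGraph) : PreGMap := ⟨id, G.corolla⟩

/-- The inner coface map `δ^b : G/b → G`: identity on edges, sending the merged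
vertex to the embedded barbell subgraph of `G` around `b`, and every other
vertex to its corolla. -/
def innerCoface (G : HGraph) (b : ℕ) : PreGMap :=
  let x := (G.att b).getD 0
  let y := (G.att (G.ι b)).getD 0
  { e := id
    vimg := fun v => if v = min x y then
        ({x, y}, G.H.filter fun h =>
          G.att h = some x ∨ G.att h = some y ∨
          G.att (G.ι h) = some x ∨ G.att (G.ι h) = some y)
      else G.corolla v }

/-- The outer coface map `δ^v : G/v → G`: identity on edges, every vertex to its corolla. -/
def outerCoface (G : HGraph) (_v : ℕ) : PreGMap := ⟨id, G.corolla⟩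

/-- The cosnip map `δ^ℓ : G/ℓ → G`: both new legs are sent to the loop `l`,
identity on vertices. -/
def cosnip (G : HGraph) (l a b : ℕ) : PreGMap :=
  { e := fun h => if h = a then G.ι l else if h = b then l else h
    vimg := G.corolla }

/-- The codegeneracy map `σ^b : G_b → G`: the two halves of the subdivided edge
are sent to `b`, the new bivalent vertex to the edge graph `η_b`, and every
other vertex to its corolla. -/
def codegeneracy (G : HGraph) (b u n₁ n₂ : ℕ) : PreGMap :=
  { e := fun h => if h = n₁ then G.ι b else if h = n₂ then b else h
    vimg := fun v => if v = u then ((∅ : Finset ℕ), ({b, G.ι b} : Finset ℕ))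
      else G.corolla v }

/-- The conditions for `f` to be a graphical map `G → G'`: it maps edges to
edges, each vertex to an embedded subgraph of `G'`, the vertex sets of the
images are disjoint and together exhaust the vertices of `G'`, and boundaries
match: each half-edge at `v` is sent into the subgraph at `v`. -/
def IsGMap (G G' : HGraph) (f : PreGMap) : Prop :=
  (∀ h ∈ G.H, f.e h ∈ G'.H ∧ (f.e (G.ι h) = f.e h ∨ f.e (G.ι h) = G'.ι (f.e h))) ∧
  (∀ v ∈ G.V, (f.vimg v).1 ⊆ G'.V ∧ (f.vimg v).2 ⊆ G'.H) ∧
  (∀ v ∈ G.V, ∀ w ∈ G.V, v ≠ w → Disjoint (f.vimg v).1 (f.vimg w).1) ∧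
  G.V.biUnion (fun v => (f.vimg v).1) = G'.V ∧
  (∀ v ∈ G.V, ∀ h ∈ G.H, G.att h = some v → f.e h ∈ (f.vimg v).2)

end HGraph

/-- The three kinds of coface maps: inner cofaces, outer cofaces, and cosnips. -/
inductive CofaceKind where
  | inner (e : ℕ)
  | outer (v : ℕ)
  | snip (l a b : ℕ)

namespace HGraph

/-- The source of the coface map of kind `k` into `G`. -/
def cofaceSource (G : HGraph) : CofaceKind → HGraph
  | .inner e => G.contract e
  | .outer v => G.delVertex v
  | .snip l a b => G.snip l a b

/-- The coface map of kind `k` into `G`. -/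
def cofaceMap (G : HGraph) : CofaceKind → PreGMap
  | .inner e => G.innerCoface e
  | .outer v => G.outerCoface v
  | .snip l a b => G.cosnip l a b

/-- Validity of a coface map into `G`: inner cofaces contract non-loop inner
edges, outer cofaces delete outer vertices, cosnips snip loops (with fresh
names, leaving the graph connected). -/
def IsCoface (G : HGraph) : CofaceKind → Prop
  | .inner e => G.IsInnerEdge e ∧ ¬ G.IsLoop e
  | .outer v => G.IsOuterVertex v
  | .snip l a b => G.IsLoop l ∧ a ∉ G.H ∧ b ∉ G.H ∧ a ≠ b ∧ (G.snip l a b).Connected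

end HGraph

/-- `CofaceSeq G₁ G₂ f`: `f : G₁ → G₂` is a composite of a sequence of coface maps. -/
inductive CofaceSeq : HGraph → HGraph → PreGMap → Prop where
  | nil (G : HGraph) : CofaceSeq G G G.idMap
  | cons {G₁ G₂ : HGraph} {f : PreGMap} (k : CofaceKind) (hk : G₂.IsCoface k)
      (h : CofaceSeq G₁ (G₂.cofaceSource k) f) :
      CofaceSeq G₁ G₂ ((G₂.cofaceMap k).comp f)

/-- `DegenSeq G₁ G₂ f`: `f : G₁ → G₂` is a composite of a sequence of codegeneracy maps. -/
inductive DegenSeq : HGraph → HGraph → PreGMap → Prop where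
  | nil (G : HGraph) : DegenSeq G G G.idMap
  | cons {G₁ G₂ : HGraph} {f : PreGMap} (b u n₁ n₂ : ℕ) (hb : G₂.IsDegen b u n₁ n₂)
      (h : DegenSeq G₁ (G₂.subdiv b u n₁ n₂) f) :
      DegenSeq G₁ G₂ ((G₂.codegeneracy b u n₁ n₂).comp f)

/-- `ElemSeq G₁ G₂ f`: `f : G₁ → G₂` is an arbitrary composite of coface and
codegeneracy maps. -/
inductive ElemSeq : HGraph → HGraph → PreGMap → Prop where
  | nil (G : HGraph) : ElemSeq G G G.idMap
  | coface {G₁ G₂ : HGraph} {f : PreGMap} (k : CofaceKind) (hk : G₂.IsCoface k)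
      (h : ElemSeq G₁ (G₂.cofaceSource k) f) :
      ElemSeq G₁ G₂ ((G₂.cofaceMap k).comp f)
  | degen {G₁ G₂ : HGraph} {f : PreGMap} (b u n₁ n₂ : ℕ) (hb : G₂.IsDegen b u n₁ n₂)
      (h : ElemSeq G₁ (G₂.subdiv b u n₁ n₂) f) :
      ElemSeq G₁ G₂ ((G₂.codegeneracy b u n₁ n₂).comp f)

/-! Deleting `v` removes the half-edges all of whose attached ends are at `v` (and which have
one), and detaches the remaining ends at `v`. Since `ι` is an involution, both halves of an
edge are treated alike, so an edge survives the deletion of `v` and then `w` exactly when it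
has an attached end outside `{v, w}` or none at all: a condition symmetric in `v` and `w`, as
is detaching the ends at `v` and at `w`. On vertices, both composites send `u` to its corolla
in `G`, because corollas only lose half-edges under deletion. -/

namespace HGraph

def detach (v : ℕ) (x : Option ℕ) : Option ℕ := if x = some v then none else x

def OnlyAt (v : ℕ) (x y : Option ℕ) : Prop :=
  (x = some v ∨ y = some v) ∧ (x = some v ∨ x = none) ∧ (y = some v ∨ y = none)

theorem detach_comm (v w : ℕ) (x : Option ℕ) :
    detach w (detach v x) = detach v (detach w x) := by
  unfold detach
  split_ifs <;> simp_all

theorem eq_some_of_detach_eq_some {v u : ℕ} {x : Option ℕ} (h : detach v x = some u) :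
    x = some u := by
  unfold detach at h
  split_ifs at h
  exact h

theorem onlyAt_comm (v : ℕ) (x y : Option ℕ) : OnlyAt v x y ↔ OnlyAt v y x := by
  unfold OnlyAt
  tauto

theorem not_onlyAt_detach_comm (v w : ℕ) (x y : Option ℕ) :
    (¬ OnlyAt v x y ∧ ¬ OnlyAt w (detach v x) (detach v y)) ↔
      (¬ OnlyAt w x y ∧ ¬ OnlyAt v (detach w x) (detach w y)) := by
  unfold OnlyAt detach
  rcases x with _ | a <;> rcases y with _ | b <;> grind

theorem ext {G₁ G₂ : HGraph} (hV : G₁.V = G₂.V) (hH : G₁.H = G₂.H) (hι : G₁.ι = G₂.ι)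
    (hatt : G₁.att = G₂.att) : G₁ = G₂ := by
  cases G₁
  cases G₂
  simp_all

section delVertex

variable (G : HGraph) (v w : ℕ)

theorem mem_delVertex_H {h : ℕ} :
    h ∈ (G.delVertex v).H ↔ h ∈ G.H ∧ ¬ OnlyAt v (G.att h) (G.att (G.ι h)) := by
  simp [delVertex, OnlyAt]

theorem delVertex_ι (h : ℕ) :
    (G.delVertex v).ι h = if h ∈ (G.delVertex v).H then G.ι h else h := rfl

theorem delVertex_att (h : ℕ) :
    (G.delVertex v).att h = if h ∈ (G.delVertex v).H then detach v (G.att h) else none := rfl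

theorem delVertex_ι_of_mem {h : ℕ} (hh : h ∈ (G.delVertex v).H) :
    (G.delVertex v).ι h = G.ι h := if_pos hh

theorem delVertex_att_of_mem {h : ℕ} (hh : h ∈ (G.delVertex v).H) :
    (G.delVertex v).att h = detach v (G.att h) := if_pos hh

theorem eq_some_of_delVertex_att_eq_some {h u : ℕ} (hu : (G.delVertex v).att h = some u) :
    G.att h = some u := by
  rw [delVertex_att] at hu
  split_ifs at hu
  exact eq_some_of_detach_eq_some hu

theorem delVertex_delVertex_ι (h : ℕ) :
    ((G.delVertex v).delVertex w).ι h =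
      if h ∈ ((G.delVertex v).delVertex w).H then G.ι h else h := by
  rw [delVertex_ι]
  split_ifs with hh
  · exact delVertex_ι_of_mem G v ((mem_delVertex_H _ _).mp hh).1
  · rfl

theorem delVertex_delVertex_att (h : ℕ) :
    ((G.delVertex v).delVertex w).att h =
      if h ∈ ((G.delVertex v).delVertex w).H then detach w (detach v (G.att h)) else none := by
  rw [delVertex_att]
  split_ifs with hh
  · rw [delVertex_att_of_mem G v ((mem_delVertex_H _ _).mp hh).1]
  · rfl

theorem corolla_delVertex_snd_subset (u : ℕ) :
    ((G.delVertex v).corolla u).2 ⊆ (G.corolla u).2 := by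
  intro h hh
  simp only [corolla, Finset.mem_filter] at hh ⊢
  obtain ⟨hmem, hu⟩ := hh
  refine ⟨((G.mem_delVertex_H v).mp hmem).1, ?_⟩
  rw [delVertex_ι_of_mem G v hmem] at hu
  exact hu.imp (G.eq_some_of_delVertex_att_eq_some v) (G.eq_some_of_delVertex_att_eq_some v)

theorem outerCoface_comp_outerCoface :
    (G.outerCoface v).comp ((G.delVertex v).outerCoface w) = G.idMap := by
  simp only [PreGMap.comp, outerCoface, idMap]
  congr 1
  funext u
  simp only [corolla, Finset.singleton_biUnion, Finset.image_id]
  exact congrArg _ (Finset.union_eq_right.mpr (G.corolla_delVertex_snd_subset v u))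

end delVertex

section involution

variable {G : HGraph}

theorem delVertex_att_ι_of_mem (hι : ∀ h ∈ G.H, G.ι h ∈ G.H) (hιι : ∀ h ∈ G.H, G.ι (G.ι h) = h)
    {v h : ℕ} (hh : h ∈ (G.delVertex v).H) :
    (G.delVertex v).att ((G.delVertex v).ι h) = detach v (G.att (G.ι h)) := by
  obtain ⟨hG, hv⟩ := (G.mem_delVertex_H v).mp hh
  rw [delVertex_ι_of_mem G v hh]
  refine delVertex_att_of_mem G v ((G.mem_delVertex_H v).mpr ⟨hι h hG, ?_⟩)
  rwa [hιι h hG, onlyAt_comm]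

theorem mem_delVertex_delVertex_H (hι : ∀ h ∈ G.H, G.ι h ∈ G.H) (hιι : ∀ h ∈ G.H, G.ι (G.ι h) = h)
    {v w h : ℕ} :
    h ∈ ((G.delVertex v).delVertex w).H ↔ h ∈ G.H ∧ ¬ OnlyAt v (G.att h) (G.att (G.ι h)) ∧
      ¬ OnlyAt w (detach v (G.att h)) (detach v (G.att (G.ι h))) := by
  rw [mem_delVertex_H]
  constructor
  · rintro ⟨hh, hw⟩
    rw [delVertex_att_of_mem G v hh, delVertex_att_ι_of_mem hι hιι hh] at hw
    exact ⟨((G.mem_delVertex_H v).mp hh).1, ((G.mem_delVertex_H v).mp hh).2, hw⟩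
  · rintro ⟨hG, hv, hw⟩
    have hh : h ∈ (G.delVertex v).H := (G.mem_delVertex_H v).mpr ⟨hG, hv⟩
    rw [delVertex_att_of_mem G v hh, delVertex_att_ι_of_mem hι hιι hh]
    exact ⟨hh, hw⟩

theorem delVertex_delVertex_H_comm (hι : ∀ h ∈ G.H, G.ι h ∈ G.H) (hιι : ∀ h ∈ G.H, G.ι (G.ι h) = h)
    (v w : ℕ) :
    ((G.delVertex v).delVertex w).H = ((G.delVertex w).delVertex v).H := by
  ext h
  rw [mem_delVertex_delVertex_H hι hιι, mem_delVertex_delVertex_H hι hιι]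
  exact and_congr_right fun _ => not_onlyAt_detach_comm v w _ _

theorem delVertex_delVertex_comm (hι : ∀ h ∈ G.H, G.ι h ∈ G.H) (hιι : ∀ h ∈ G.H, G.ι (G.ι h) = h)
    (v w : ℕ) :
    (G.delVertex v).delVertex w = (G.delVertex w).delVertex v := by
  have hH := delVertex_delVertex_H_comm hι hιι v w
  refine ext Finset.erase_right_comm hH ?_ ?_
  · funext h
    rw [delVertex_delVertex_ι, delVertex_delVertex_ι, hH]
  · funext h
    rw [delVertex_delVertex_att, delVertex_delVertex_att, hH, detach_comm]

end involution

end HGraph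

theorem outer_cofaces_commute_general (G : HGraph) (hG : G.Wf)
    (v w : ℕ) :
    (G.delVertex v).delVertex w = (G.delVertex w).delVertex v ∧
    PreGMap.EqOn ((G.delVertex v).delVertex w)
      ((G.outerCoface v).comp ((G.delVertex v).outerCoface w))
      ((G.outerCoface w).comp ((G.delVertex w).outerCoface v)) := by
  obtain ⟨hι, hιι, -, -⟩ := hG
  refine ⟨HGraph.delVertex_delVertex_comm hι hιι v w, ?_⟩
  rw [G.outerCoface_comp_outerCoface, G.outerCoface_comp_outerCoface]
  exact ⟨fun _ _ => rfl, fun _ _ => rfl⟩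

/-- For a graph `G` with at least `3` vertices and two
distinct outer vertices `v` and `w`, deleting them in either order gives the
same graph, `(G/v)/w = (G/w)/v`, and the square of outer coface maps commutes:
`δ^v ∘ δ^w = δ^w ∘ δ^v` as graphical maps `(G/v)/w → G`. -/
theorem outer_cofaces_commute (G : HGraph) (hG : G.Wf) (hcard : 3 ≤ G.V.card)
    (v w : ℕ) (hv : G.IsOuterVertex v) (hw : G.IsOuterVertex w) (hvw : v ≠ w) :
    (G.delVertex v).delVertex w = (G.delVertex w).delVertex v ∧
    PreGMap.EqOn ((G.delVertex v).delVertex w)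
      ((G.outerCoface v).comp ((G.delVertex v).outerCoface w))
      ((G.outerCoface w).comp ((G.delVertex w).outerCoface v)) :=
  outer_cofaces_commute_general G hG v w
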